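/- arXiv:2101.04481 — 6 statements merged into one kernel-verified Lean document; each statement's English description precedes it below -/
import Mathlib

section
/- For the three-parameter Mittag-Leffler (Prabhakar) function E_{α,β}^δ(z) = Σ_{r≥0} z^r Γ(δ+r)/(Γ(αr+β) r! Γ(δ)), one has ∫_0^∞ t^{β-1} e^{−zt} E_{α,β}^δ(ζ t^α) dt = z^{−β}(1 − ζ z^{−α})^{−δ} for real α, β, z > 0 with z^α > |ζ|. -/
/-!
Expand `E^δ_{α,β}(ζ t^α)` termwise. The `r`-th term integrates against `t^{β-1} e^{-zt}` to
`Γ(αr+β) z^{-(αr+β)}`, which cancels the `Γ(αr+β)` of its coefficient, leaving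
`z^{-β} Σ_r (δ)_r / r! (ζ z^{-α})^r`: the binomial series of `z^{-β} (1 - ζ z^{-α})^{-δ}`.
Sum and integral may be swapped because the same computation with `|ζ|` in place of `ζ` gives a
convergent series, as `|ζ| z^{-α} < 1`.
-/

open MeasureTheory Real Set

/-- Three-parameter Mittag-Leffler (Prabhakar) function. -/
noncomputable def mittagLeffler3 (α β δ z : ℝ) : ℝ :=
  ∑' r : ℕ, z ^ r * Real.Gamma (δ + r) /
    (Real.Gamma (α * r + β) * (Nat.factorial r) * Real.Gamma δ)

open scoped Nat

open Polynomial in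
theorem Real.Gamma_add_nat_eq_ascPochhammer_eval_mul {a : ℝ} (ha : 0 < a) (n : ℕ) :
    Gamma (a + n) = (ascPochhammer ℝ n).eval a * Gamma a := by
  induction n with
  | zero => simp
  | succ n ih =>
    rw [Nat.cast_succ, ← add_assoc, Gamma_add_one (by positivity : (0 : ℝ) < a + n).ne', ih,
      ascPochhammer_succ_eval]
    ring

open Polynomial in
theorem Ring.choose_add_nat_sub_one_eq_ascPochhammer_div {R : Type*} [Field R] [CharZero R]
    (a : R) (n : ℕ) : Ring.choose (a + n - 1) n = (ascPochhammer R n).eval a / n ! := by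
  rw [Ring.choose_eq_smul, descPochhammer_smeval_eq_ascPochhammer, ascPochhammer_smeval_eq_eval,
    smul_eq_mul, inv_mul_eq_div]
  ring_nf

theorem Real.hasSum_Gamma_add_div_factorial_mul_pow {δ : ℝ} (hδ : 0 < δ) {x : ℝ} (hx : |x| < 1) :
    HasSum (fun n : ℕ => Gamma (δ + n) / n ! * x ^ n) (Gamma δ * (1 - x) ^ (-δ)) := by
  have h := (one_div_one_sub_rpow_hasFPowerSeriesOnBall_zero δ).hasSum
    (y := x) (by simpa [enorm_eq_nnnorm, ← NNReal.coe_lt_one] using hx)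
  simp only [FormalMultilinearSeries.ofScalars_apply_eq,
    Ring.choose_add_nat_sub_one_eq_ascPochhammer_div, zero_add, smul_eq_mul] at h
  have hx1 : 0 < 1 - x := by linarith [(abs_lt.mp hx).2]
  have hsum := h.mul_left (Gamma δ)
  rw [one_div, ← rpow_neg hx1.le] at hsum
  refine hsum.congr_fun fun n => ?_
  rw [Gamma_add_nat_eq_ascPochhammer_eval_mul hδ]
  ring

theorem integrableOn_rpow_sub_one_mul_exp_neg_mul {a z : ℝ} (ha : 0 < a) (hz : 0 < z) :
    IntegrableOn (fun t : ℝ => t ^ (a - 1) * exp (-(z * t))) (Ioi 0) := by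
  simpa only [rpow_one, neg_mul] using
    integrableOn_rpow_mul_exp_neg_mul_rpow (by linarith : -1 < a - 1) one_pos hz

theorem integral_tsum_rpow_sub_one_mul_exp_neg_mul {c a : ℕ → ℝ} {z : ℝ} (ha : ∀ r, 0 < a r)
    (hz : 0 < z) (hc : Summable fun r => |c r| * ((1 / z) ^ a r * Gamma (a r))) :
    ∫ t in Ioi 0, ∑' r, c r * (t ^ (a r - 1) * exp (-(z * t)))
      = ∑' r, c r * ((1 / z) ^ a r * Gamma (a r)) := by
  have hint (r : ℕ) : IntegrableOn (fun t => c r * (t ^ (a r - 1) * exp (-(z * t)))) (Ioi 0) :=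
    (integrableOn_rpow_sub_one_mul_exp_neg_mul (ha r) hz).const_mul _
  have hnorm (r : ℕ) : ∫ t in Ioi 0, ‖c r * (t ^ (a r - 1) * exp (-(z * t)))‖
      = |c r| * ((1 / z) ^ a r * Gamma (a r)) := by
    rw [← integral_rpow_mul_exp_neg_mul_Ioi (ha r) hz, ← integral_const_mul]
    refine setIntegral_congr_fun measurableSet_Ioi fun t (ht : 0 < t) => ?_
    rw [Real.norm_eq_abs, abs_mul,
      abs_of_nonneg (by positivity : 0 ≤ t ^ (a r - 1) * exp (-(z * t)))]
  rw [← integral_tsum_of_summable_integral_norm hint (by simpa only [hnorm] using hc)]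
  refine tsum_congr fun r => ?_
  rw [integral_const_mul, integral_rpow_mul_exp_neg_mul_Ioi (ha r) hz]

theorem integral_rpow_mul_exp_neg_mul_tsum_mul_pow {c : ℕ → ℝ} {α β z ζ : ℝ} (hα : 0 ≤ α)
    (hβ : 0 < β) (hz : 0 < z)
    (hc : Summable fun r : ℕ => |c r| * |ζ| ^ r * ((1 / z) ^ (α * r + β) * Gamma (α * r + β))) :
    ∫ t in Ioi 0, t ^ (β - 1) * exp (-z * t) * ∑' r, c r * (ζ * t ^ α) ^ r
      = ∑' r : ℕ, c r * ζ ^ r * ((1 / z) ^ (α * r + β) * Gamma (α * r + β)) := by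
  have hterm (t : ℝ) (ht : 0 < t) (r : ℕ) :
      t ^ (β - 1) * exp (-z * t) * (c r * (ζ * t ^ α) ^ r)
        = c r * ζ ^ r * (t ^ (α * r + β - 1) * exp (-(z * t))) := by
    rw [add_sub_assoc, rpow_add ht, mul_pow, ← rpow_mul_natCast ht.le, neg_mul]
    ring
  rw [← integral_tsum_rpow_sub_one_mul_exp_neg_mul (fun r => by positivity) hz
    (by simpa only [abs_mul, abs_pow] using hc)]
  refine setIntegral_congr_fun measurableSet_Ioi fun t (ht : 0 < t) => ?_
  simp only [← tsum_mul_left, hterm t ht]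

theorem mittagLeffler3_eq_tsum (α β δ w : ℝ) :
    mittagLeffler3 α β δ w
      = ∑' r : ℕ, Gamma (δ + r) / (Gamma (α * r + β) * r ! * Gamma δ) * w ^ r :=
  tsum_congr fun r => by ring

theorem one_div_rpow_mul_nat_add {z : ℝ} (hz : 0 < z) (α β : ℝ) (r : ℕ) :
    (1 / z) ^ (α * r + β) = (z ^ (-α)) ^ r * z ^ (-β) := by
  rw [one_div, inv_rpow hz.le, ← rpow_neg hz.le, neg_add, rpow_add hz, ← neg_mul,
    rpow_mul_natCast hz.le]

theorem laplace_transform_prabhakar (α β δ z ζ : ℝ) (hα : 0 < α) (hβ : 0 < β)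
    (hδ : 0 < δ) (hz : 0 < z) (hζ : |ζ| < z ^ α) :
    ∫ t in Set.Ioi (0 : ℝ),
        t ^ (β - 1) * Real.exp (-z * t) * mittagLeffler3 α β δ (ζ * t ^ α)
      = z ^ (-β) * (1 - ζ * z ^ (-α)) ^ (-δ) := by
  have hx (w : ℝ) (hw : |w| < z ^ α) : |w * z ^ (-α)| < 1 := by
    rwa [abs_mul, abs_of_pos (rpow_pos_of_pos hz _), rpow_neg hz.le, ← div_eq_mul_inv,
      div_lt_one (rpow_pos_of_pos hz _)]
  have hterm (w : ℝ) (r : ℕ) :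
      Gamma (δ + r) / (Gamma (α * r + β) * r ! * Gamma δ) * w ^ r
          * ((1 / z) ^ (α * r + β) * Gamma (α * r + β))
        = z ^ (-β) / Gamma δ * (Gamma (δ + r) / r ! * (w * z ^ (-α)) ^ r) := by
    have : Gamma (α * r + β) ≠ 0 := (Gamma_pos_of_pos (by positivity)).ne'
    rw [one_div_rpow_mul_nat_add hz, mul_pow]
    field_simp
  have hsum := hasSum_Gamma_add_div_factorial_mul_pow hδ (hx ζ hζ)
  have hsum_abs := hasSum_Gamma_add_div_factorial_mul_pow hδ (hx |ζ| (by rwa [abs_abs]))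
  have hcoeff (r : ℕ) : 0 ≤ Gamma (δ + r) / (Gamma (α * r + β) * r ! * Gamma δ) := by positivity
  simp_rw [mittagLeffler3_eq_tsum]
  rw [integral_rpow_mul_exp_neg_mul_tsum_mul_pow hα.le hβ hz]
  · simp_rw [hterm, tsum_mul_left, hsum.tsum_eq]
    field_simp
  · simp_rw [abs_of_nonneg (hcoeff _), hterm]
    exact hsum_abs.summable.mul_left _
end

section
/- The variance of the marginal Q_j of the fractional Dirichlet distribution satisfies Var(Q_j) ≥ β_j(β̄−β_j)/(β̄²(β̄+1)), with equality iff ν = 1; i.e. the marginals are overdispersed relative to the classical Dirichlet(β) marginals. -/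
/-! The fractional Dirichlet variance is the Dirichlet variance `β_j(β̄ - β_j)/(β̄²(β̄ + 1))`, which is
positive for `0 < β_j < β̄`, times the factor `1 + β̄(1 - ν)`. That factor is at least `1` since
`ν ≤ 1`, and equals `1` exactly when `ν = 1` since `β̄ ≠ 0`. -/

noncomputable def dirichletMarginalVariance (βj βbar : ℝ) : ℝ :=
  βj * (βbar - βj) / (βbar ^ 2 * (βbar + 1))

lemma dirichletMarginalVariance_pos {βj βbar : ℝ} (hβj : 0 < βj) (hβ : βj < βbar) :
    0 < dirichletMarginalVariance βj βbar := by
  have hbar : 0 < βbar := hβj.trans hβ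
  unfold dirichletMarginalVariance
  exact div_pos (mul_pos hβj (sub_pos.mpr hβ)) (by positivity)

lemma one_le_one_add_mul_one_sub {β ν : ℝ} (hβ : 0 ≤ β) (hν : ν ≤ 1) :
    1 ≤ 1 + β * (1 - ν) :=
  le_add_of_nonneg_right (mul_nonneg hβ (sub_nonneg.mpr hν))

lemma one_add_mul_one_sub_eq_one_iff {β ν : ℝ} (hβ : β ≠ 0) :
    1 + β * (1 - ν) = 1 ↔ ν = 1 := by
  rw [add_eq_left, mul_eq_zero, sub_eq_zero]
  simp [hβ, eq_comm]

theorem overdispersion_fracDirichlet (ν βj βbar : ℝ) (hν : ν ∈ Set.Ioc (0 : ℝ) 1)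
    (hβj : 0 < βj) (hβ : βj < βbar) :
    βj * (βbar - βj) / (βbar ^ 2 * (βbar + 1)) * (1 + βbar * (1 - ν))
      ≥ βj * (βbar - βj) / (βbar ^ 2 * (βbar + 1)) ∧
    (βj * (βbar - βj) / (βbar ^ 2 * (βbar + 1)) * (1 + βbar * (1 - ν))
      = βj * (βbar - βj) / (βbar ^ 2 * (βbar + 1)) ↔ ν = 1) := by
  change dirichletMarginalVariance βj βbar * _ ≥ dirichletMarginalVariance βj βbar ∧
    (dirichletMarginalVariance βj βbar * _ = dirichletMarginalVariance βj βbar ↔ _)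
  have hbar : 0 < βbar := hβj.trans hβ
  have hvar : 0 < dirichletMarginalVariance βj βbar := dirichletMarginalVariance_pos hβj hβ
  refine ⟨le_mul_of_one_le_right hvar.le (one_le_one_add_mul_one_sub hbar.le hν.2), ?_⟩
  rw [mul_eq_left₀ hvar.ne', one_add_mul_one_sub_eq_one_iff hbar.ne']
end

section
/- For ν > 0 and β₁, β₂ > 0, ∫_0^1 q^{νβ₁−1}(1−q)^{νβ₂−1}(q^ν + (1−q)^ν)^{−(β₁+β₂)} dq = Γ(β₁)Γ(β₂)/(ν Γ(β₁+β₂)). -/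
/-!
The substitution `x = q ^ ν / (q ^ ν + (1 - q) ^ ν)` is a strictly increasing bijection of
`(0, 1)` onto itself, with `1 - x = (1 - q) ^ ν / (q ^ ν + (1 - q) ^ ν)` and
`dx = ν q ^ (ν - 1) (1 - q) ^ (ν - 1) / (q ^ ν + (1 - q) ^ ν) ^ 2 dq`. It turns
`x ^ (β₁ - 1) (1 - x) ^ (β₂ - 1) dx` into `ν` times the integrand of the theorem, so the integral
is `B(β₁, β₂) / ν`.
-/

open MeasureTheory Real Set

theorem integral_rpow_mul_one_sub_rpow {a b : ℝ} (ha : 0 < a) (hb : 0 < b) :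
    ∫ x in Ioo (0 : ℝ) 1, x ^ (a - 1) * (1 - x) ^ (b - 1)
      = Gamma a * Gamma b / Gamma (a + b) := by
  have hbeta : Complex.betaIntegral a b
      = ((∫ x in Ioo (0 : ℝ) 1, x ^ (a - 1) * (1 - x) ^ (b - 1) : ℝ) : ℂ) := by
    rw [Complex.betaIntegral, intervalIntegral.integral_of_le zero_le_one,
      integral_Ioc_eq_integral_Ioo]
    refine (setIntegral_congr_fun (g := fun x : ℝ => ((x ^ (a - 1) * (1 - x) ^ (b - 1) : ℝ) : ℂ))
      measurableSet_Ioo fun x hx => ?_).trans integral_ofReal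
    dsimp only
    rw [Complex.ofReal_mul, Complex.ofReal_cpow hx.1.le, Complex.ofReal_cpow (sub_pos.2 hx.2).le]
    push_cast
    rfl
  have key := Complex.betaIntegral_eq_Gamma_mul_div a b (by simpa) (by simpa)
  rw [hbeta, ← Complex.ofReal_add, Complex.Gamma_ofReal, Complex.Gamma_ofReal,
    Complex.Gamma_ofReal] at key
  exact_mod_cast key

noncomputable def powShare (ν q : ℝ) : ℝ :=
  q ^ ν / (q ^ ν + (1 - q) ^ ν)

noncomputable def powShareDeriv (ν q : ℝ) : ℝ :=
  ν * q ^ (ν - 1) * (1 - q) ^ (ν - 1) / (q ^ ν + (1 - q) ^ ν) ^ 2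

section powShare

variable {ν q : ℝ}

theorem rpow_add_one_sub_rpow_pos (hq : q ∈ Icc (0 : ℝ) 1) : 0 < q ^ ν + (1 - q) ^ ν := by
  rcases hq.1.eq_or_lt with rfl | hq0
  · simp only [sub_zero, one_rpow]
    positivity
  · exact add_pos_of_pos_of_nonneg (rpow_pos_of_pos hq0 ν) (rpow_nonneg (sub_nonneg.2 hq.2) ν)

theorem one_sub_powShare (hq : q ∈ Icc (0 : ℝ) 1) :
    1 - powShare ν q = (1 - q) ^ ν / (q ^ ν + (1 - q) ^ ν) := by
  rw [powShare, eq_div_iff (rpow_add_one_sub_rpow_pos hq).ne', sub_mul,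
    div_mul_cancel₀ _ (rpow_add_one_sub_rpow_pos hq).ne']
  ring

theorem hasDerivAt_powShare (hq : q ∈ Ioo (0 : ℝ) 1) :
    HasDerivAt (powShare ν) (powShareDeriv ν q) q := by
  have hq1 : 0 < 1 - q := sub_pos.2 hq.2
  have hnum : HasDerivAt (fun q : ℝ => q ^ ν) (ν * q ^ (ν - 1)) q :=
    hasDerivAt_rpow_const (Or.inl hq.1.ne')
  have hcompl : HasDerivAt (fun q : ℝ => (1 - q) ^ ν) (ν * (1 - q) ^ (ν - 1) * (-1)) q :=
    (hasDerivAt_rpow_const (Or.inl hq1.ne')).comp q ((hasDerivAt_id q).const_sub 1)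
  refine (hnum.div (hnum.add hcompl) (rpow_add_one_sub_rpow_pos (Ioo_subset_Icc_self hq)).ne')
    |>.congr_deriv ?_
  have hq_pow : q ^ ν = q ^ (ν - 1) * q := by
    rw [← rpow_add_one hq.1.ne', sub_add_cancel]
  have hq1_pow : (1 - q) ^ ν = (1 - q) ^ (ν - 1) * (1 - q) := by
    rw [← rpow_add_one hq1.ne', sub_add_cancel]
  rw [Pi.add_apply, powShareDeriv, hq_pow, hq1_pow]
  ring

theorem powShareDeriv_pos (hν : 0 < ν) (hq : q ∈ Ioo (0 : ℝ) 1) : 0 < powShareDeriv ν q := by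
  have := rpow_pos_of_pos hq.1 (ν - 1)
  have := rpow_pos_of_pos (sub_pos.2 hq.2) (ν - 1)
  have := rpow_add_one_sub_rpow_pos (ν := ν) (Ioo_subset_Icc_self hq)
  unfold powShareDeriv
  positivity

theorem continuousOn_powShare (hν : 0 ≤ ν) : ContinuousOn (powShare ν) (Icc 0 1) := by
  have hpow : Continuous fun x : ℝ => x ^ ν := continuous_rpow_const hν
  exact (hpow.continuousOn.div (hpow.add (hpow.comp (continuous_sub_left 1))).continuousOn
    fun q hq => (rpow_add_one_sub_rpow_pos hq).ne')

theorem strictMonoOn_powShare (hν : 0 < ν) : StrictMonoOn (powShare ν) (Icc 0 1) :=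
  strictMonoOn_of_deriv_pos (convex_Icc 0 1) (continuousOn_powShare hν.le) fun q hq => by
    rw [interior_Icc] at hq
    rw [(hasDerivAt_powShare hq).deriv]
    exact powShareDeriv_pos hν hq

theorem image_powShare_Ioo (hν : 0 < ν) : powShare ν '' Ioo 0 1 = Ioo 0 1 := by
  rw [(continuousOn_powShare hν.le).image_Ioo_of_strictMonoOn zero_le_one
    (strictMonoOn_powShare hν)]
  simp [powShare, zero_rpow hν.ne']

theorem powShareDeriv_mul_rpow_powShare_mul_rpow_one_sub_powShare (β₁ β₂ : ℝ)
    (hq : q ∈ Ioo (0 : ℝ) 1) :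
    powShareDeriv ν q * (powShare ν q ^ (β₁ - 1) * (1 - powShare ν q) ^ (β₂ - 1))
      = ν * (q ^ (ν * β₁ - 1) * (1 - q) ^ (ν * β₂ - 1)
          * (q ^ ν + (1 - q) ^ ν) ^ (-(β₁ + β₂))) := by
  have hq1 : 0 < 1 - q := sub_pos.2 hq.2
  have hS : 0 < q ^ ν + (1 - q) ^ ν := rpow_add_one_sub_rpow_pos (Ioo_subset_Icc_self hq)
  rw [one_sub_powShare (Ioo_subset_Icc_self hq), powShare, powShareDeriv]
  set S := q ^ ν + (1 - q) ^ ν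
  rw [div_rpow (rpow_nonneg hq.1.le ν) hS.le, div_rpow (rpow_nonneg hq1.le ν) hS.le,
    ← rpow_mul hq.1.le, ← rpow_mul hq1.le]
  have hq_pow : q ^ (ν * β₁ - 1) = q ^ (ν - 1) * q ^ (ν * (β₁ - 1)) := by
    rw [← rpow_add hq.1]; congr 1; ring
  have hq1_pow : (1 - q) ^ (ν * β₂ - 1) = (1 - q) ^ (ν - 1) * (1 - q) ^ (ν * (β₂ - 1)) := by
    rw [← rpow_add hq1]; congr 1; ring
  have hS_pow : S ^ (-(β₁ + β₂)) = (S ^ 2 * S ^ (β₁ - 1) * S ^ (β₂ - 1))⁻¹ := by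
    rw [← rpow_natCast, ← rpow_add hS, ← rpow_add hS, ← rpow_neg hS.le]
    congr 1
    push_cast
    ring
  rw [hq_pow, hq1_pow, hS_pow]
  have := (rpow_pos_of_pos hS (β₁ - 1)).ne'
  have := (rpow_pos_of_pos hS (β₂ - 1)).ne'
  field_simp

end powShare

theorem genDirichlet_normalization_two (ν β₁ β₂ : ℝ) (hν : 0 < ν)
    (hβ₁ : 0 < β₁) (hβ₂ : 0 < β₂) :
    ∫ q in Set.Ioo (0 : ℝ) 1,
        q ^ (ν * β₁ - 1) * (1 - q) ^ (ν * β₂ - 1)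
          * (q ^ ν + (1 - q) ^ ν) ^ (-(β₁ + β₂))
      = Real.Gamma β₁ * Real.Gamma β₂ / (ν * Real.Gamma (β₁ + β₂)) := by
  have hsubst := integral_image_eq_integral_abs_deriv_smul measurableSet_Ioo
    (fun q hq => (hasDerivAt_powShare (ν := ν) hq).hasDerivWithinAt)
    ((strictMonoOn_powShare hν).injOn.mono Ioo_subset_Icc_self)
    (fun x => x ^ (β₁ - 1) * (1 - x) ^ (β₂ - 1))
  rw [image_powShare_Ioo hν, integral_rpow_mul_one_sub_rpow hβ₁ hβ₂,
    setIntegral_congr_fun measurableSet_Ioo fun q hq => by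
      rw [smul_eq_mul, abs_of_pos (powShareDeriv_pos hν hq),
        powShareDeriv_mul_rpow_powShare_mul_rpow_one_sub_powShare β₁ β₂ hq],
    integral_const_mul] at hsubst
  rw [← div_div, div_right_comm, hsubst, mul_div_cancel_left₀ _ hν.ne']
end

section
/- For ν > 0 and β₁,…,βₙ > 0 with β̄ = β₁+⋯+βₙ, the integral over the open simplex {q ∈ (0,1)^{n−1} : Σ qᵢ < 1} of (∏_{i=1}^{n−1} qᵢ^{νβᵢ−1}) (1−Σ qᵢ)^{νβₙ−1} (q₁^ν + ⋯ + q_{n−1}^ν + (1−Σ qᵢ)^ν)^{−β̄} equals ∏_{i=1}^n Γ(βᵢ) / (ν^{n−1} Γ(β̄)). -/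
/-!
Compute `∫ ∏ᵢ yᵢ^(νβᵢ-1) e^(-yᵢ^ν)` over the open orthant `(0,∞)ⁿ` in two ways. By Fubini it
factors into one-dimensional integrals, each equal to `Γ(βᵢ)/ν`. In the coordinates
`y = t • (q, 1 - ∑ q)`, with `q` in the open simplex and `t > 0` (Jacobian `tⁿ⁻¹`), the integrand
becomes `f(q) t^(νβ̄-1) e^(-S(q) t^ν)`, where `f(q) S(q)^(-β̄)` is the integrand of the theorem;
integrating out `t` gives `f(q) S(q)^(-β̄) Γ(β̄)/ν`.
-/

open MeasureTheory Real Set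

theorem integral_Ioi_rpow_mul_exp_neg_mul_rpow {ν b c : ℝ} (hν : 0 < ν) (hb : 0 < b)
    (hc : 0 < c) :
    ∫ x in Ioi (0 : ℝ), x ^ (ν * b - 1) * exp (-(c * x ^ ν)) = c ^ (-b) * Gamma b / ν := by
  have hq : (-1 : ℝ) < ν * b - 1 := by nlinarith [mul_pos hν hb]
  have hb' : (ν * b - 1 + 1) / ν = b := by field_simp; ring
  simp_rw [← neg_mul, integral_rpow_mul_exp_neg_mul_rpow hν hq hc, neg_div, hb']
  ring

namespace Matrix

theorem det_fromBlocks_smul_one_replicateCol {m : ℕ} (t : ℝ) (q : Fin m → ℝ) :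
    (fromBlocks (t • 1) (replicateCol Unit q) (replicateRow Unit fun _ => -t)
      (of fun _ _ => 1 - ∑ i, q i)).det = t ^ m := by
  -- adding the first `m` rows to the last one leaves a block upper-triangular matrix
  have hrow : fromBlocks (1 : Matrix (Fin m) (Fin m) ℝ) 0 (replicateRow Unit fun _ => 1) 1 *
      fromBlocks (t • 1) (replicateCol Unit q) (replicateRow Unit fun _ => -t)
        (of fun _ _ => 1 - ∑ i, q i) = fromBlocks (t • 1) (replicateCol Unit q) 0 1 := by
    rw [fromBlocks_multiply]
    congr 1 <;> ext <;> simp [mul_apply]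
  simpa [det_fromBlocks_zero₁₂, det_fromBlocks_zero₂₁] using congrArg det hrow

end Matrix

namespace GenDirichlet

variable {m : ℕ}

noncomputable def gammaKernel (ν b x : ℝ) : ℝ := x ^ (ν * b - 1) * exp (-x ^ ν)

theorem integral_gammaKernel {ν b : ℝ} (hν : 0 < ν) (hb : 0 < b) :
    ∫ x in Ioi (0 : ℝ), gammaKernel ν b x = Gamma b / ν := by
  simpa [gammaKernel] using integral_Ioi_rpow_mul_exp_neg_mul_rpow hν hb one_pos

theorem integrableOn_gammaKernel {ν b : ℝ} (hν : 0 < ν) (hb : 0 < b) :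
    IntegrableOn (gammaKernel ν b) (Ioi 0) :=
  integrableOn_rpow_mul_exp_neg_rpow (by nlinarith [mul_pos hν hb]) hν

theorem gammaKernel_mul {ν b t x : ℝ} (ht : 0 ≤ t) (hx : 0 ≤ x) :
    gammaKernel ν b (t * x) = t ^ (ν * b - 1) * x ^ (ν * b - 1) * exp (-(t ^ ν * x ^ ν)) := by
  rw [gammaKernel, mul_rpow ht hx, mul_rpow ht hx, mul_assoc]

def openSimplex (m : ℕ) : Set (Fin m → ℝ) :=
  {q | (∀ i, 0 < q i ∧ q i < 1) ∧ ∑ i, q i < 1}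

theorem measurableSet_openSimplex : MeasurableSet (openSimplex m) := by
  simp only [openSimplex, ofPred_and, ofPred_forall]
  measurability

def positiveOrthant (m : ℕ) : Set ((Fin m → ℝ) × ℝ) :=
  (univ.pi fun _ => Ioi 0) ×ˢ Ioi 0

theorem volume_restrict_positiveOrthant :
    volume.restrict (positiveOrthant m) =
      (Measure.pi fun _ : Fin m => volume.restrict (Ioi (0 : ℝ))).prod
        (volume.restrict (Ioi (0 : ℝ))) := by
  rw [positiveOrthant, Measure.volume_eq_prod, ← Measure.prod_restrict, volume_pi,
    Measure.restrict_pi_pi]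

theorem integral_positiveOrthant_prod_mul (f : Fin m → ℝ → ℝ) (g : ℝ → ℝ) :
    ∫ y in positiveOrthant m, (∏ i, f i (y.1 i)) * g y.2 =
      (∏ i, ∫ x in Ioi 0, f i x) * ∫ x in Ioi 0, g x := by
  rw [volume_restrict_positiveOrthant, ← integral_fintype_prod_eq_prod]
  exact integral_prod_mul (fun y : Fin m → ℝ => ∏ i, f i (y i)) g

theorem integrableOn_positiveOrthant_prod_mul {f : Fin m → ℝ → ℝ} {g : ℝ → ℝ}
    (hf : ∀ i, IntegrableOn (f i) (Ioi 0)) (hg : IntegrableOn g (Ioi 0)) :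
    IntegrableOn (fun y => (∏ i, f i (y.1 i)) * g y.2) (positiveOrthant m) := by
  rw [IntegrableOn, volume_restrict_positiveOrthant]
  exact (Integrable.fintype_prod hf).mul_prod (f := fun y : Fin m → ℝ => ∏ i, f i (y i)) hg

def simplexCone (p : (Fin m → ℝ) × ℝ) : (Fin m → ℝ) × ℝ :=
  (p.2 • p.1, p.2 * (1 - ∑ i, p.1 i))

noncomputable def simplexConeInv (y : (Fin m → ℝ) × ℝ) : (Fin m → ℝ) × ℝ :=
  ((∑ i, y.1 i + y.2)⁻¹ • y.1, ∑ i, y.1 i + y.2)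

theorem sum_add_simplexCone (p : (Fin m → ℝ) × ℝ) :
    ∑ i, (simplexCone p).1 i + (simplexCone p).2 = p.2 := by
  simp only [simplexCone, Pi.smul_apply, smul_eq_mul, ← Finset.mul_sum]
  ring

theorem mapsTo_simplexCone :
    MapsTo simplexCone (openSimplex m ×ˢ Ioi 0) (positiveOrthant m) := by
  rintro ⟨q, t⟩ ⟨⟨hq, hsum⟩, ht : 0 < t⟩
  exact ⟨fun i _ => mul_pos ht (hq i).1, mul_pos ht (sub_pos.2 hsum)⟩

theorem mapsTo_simplexConeInv :
    MapsTo simplexConeInv (positiveOrthant m) (openSimplex m ×ˢ Ioi 0) := by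
  rintro ⟨y, s⟩ ⟨hy, hs : 0 < s⟩
  have hy : ∀ i, 0 < y i := fun i => hy i (mem_univ i)
  have hT : 0 < ∑ i, y i + s :=
    add_pos_of_nonneg_of_pos (Finset.sum_nonneg fun i _ => (hy i).le) hs
  refine ⟨⟨fun i => ⟨?_, ?_⟩, ?_⟩, hT⟩ <;>
    simp only [simplexConeInv, Pi.smul_apply, smul_eq_mul, ← Finset.mul_sum]
  · exact mul_pos (inv_pos.2 hT) (hy i)
  · rw [inv_mul_lt_one₀ hT]
    linarith [Finset.single_le_sum (fun j _ => (hy j).le) (Finset.mem_univ i)]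
  · rw [inv_mul_lt_one₀ hT]
    linarith

theorem bijOn_simplexCone :
    BijOn simplexCone (openSimplex m ×ˢ Ioi 0) (positiveOrthant m) := by
  refine InvOn.bijOn (f' := simplexConeInv) ⟨?_, ?_⟩ mapsTo_simplexCone mapsTo_simplexConeInv
  · rintro ⟨q, t⟩ ⟨-, ht : 0 < t⟩
    simp only [simplexConeInv, sum_add_simplexCone]
    simp [simplexCone, smul_smul, inv_mul_cancel₀ ht.ne']
  · rintro ⟨y, s⟩ hys
    have hT : 0 < ∑ i, y i + s := (mapsTo_simplexConeInv hys).2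
    simp only [simplexCone, simplexConeInv, Pi.smul_apply, smul_eq_mul, smul_smul,
      mul_inv_cancel₀ hT.ne', one_smul, ← Finset.mul_sum]
    congr 1
    field_simp
    ring

noncomputable def simplexConeDeriv (p : (Fin m → ℝ) × ℝ) :
    ((Fin m → ℝ) × ℝ) →L[ℝ] (Fin m → ℝ) × ℝ :=
  LinearMap.toContinuousLinearMap
    { toFun := fun v => (p.2 • v.1 + v.2 • p.1, (1 - ∑ i, p.1 i) * v.2 - p.2 * ∑ i, v.1 i)
      map_add' := fun v w => by ext <;> simp [Finset.sum_add_distrib] <;> ring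
      map_smul' := fun c v => by ext <;> simp [← Finset.mul_sum] <;> ring }

theorem simplexConeDeriv_apply (p v : (Fin m → ℝ) × ℝ) :
    simplexConeDeriv p v =
      (p.2 • v.1 + v.2 • p.1, (1 - ∑ i, p.1 i) * v.2 - p.2 * ∑ i, v.1 i) :=
  rfl

theorem hasFDerivAt_simplexCone (p : (Fin m → ℝ) × ℝ) :
    HasFDerivAt simplexCone (simplexConeDeriv p) p := by
  have hsum : HasFDerivAt (fun p : (Fin m → ℝ) × ℝ => ∑ i, p.1 i)
      (∑ i, (ContinuousLinearMap.proj i).comp (ContinuousLinearMap.fst ℝ _ ℝ)) p :=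
    HasFDerivAt.fun_sum fun i _ =>
      (hasFDerivAt_apply i p.1).comp (g := fun q : Fin m → ℝ => q i) p hasFDerivAt_fst
  refine ((hasFDerivAt_snd.smul hasFDerivAt_fst).prodMk
    (hasFDerivAt_snd.mul ((hasFDerivAt_const 1 _).sub hsum))).congr_fderiv ?_
  ext v <;> simp [simplexConeDeriv_apply]

open Matrix in
theorem det_simplexConeDeriv (p : (Fin m → ℝ) × ℝ) : (simplexConeDeriv p).det = p.2 ^ m := by
  let b := (Pi.basisFun ℝ (Fin m)).prod (Module.Basis.singleton Unit ℝ)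
  have hmatrix : LinearMap.toMatrix b b (simplexConeDeriv p) =
      fromBlocks (p.2 • 1) (replicateCol Unit p.1) (replicateRow Unit fun _ => -p.2)
        (of fun _ _ => 1 - ∑ i, p.1 i) := by
    ext (i | i) (j | j) <;>
      simp [b, LinearMap.toMatrix_apply, simplexConeDeriv_apply, one_apply, Pi.single_apply]
  rw [ContinuousLinearMap.det, ← LinearMap.det_toMatrix b, hmatrix,
    det_fromBlocks_smul_one_replicateCol]

-- Instance search does not unfold `volume` on a product to `volume.prod volume`.
instance : (volume : Measure ((Fin m → ℝ) × ℝ)).IsAddHaarMeasure :=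
  Measure.prod.instIsAddHaarMeasure _ _

theorem abs_det_simplexConeDeriv_smul {E : Type*} [NormedAddCommGroup E] [NormedSpace ℝ E]
    (g : (Fin m → ℝ) × ℝ → E) :
    EqOn (fun p => |(simplexConeDeriv p).det| • g (simplexCone p))
      (fun p => p.2 ^ m • g (simplexCone p)) (openSimplex m ×ˢ Ioi 0) := by
  rintro p ⟨-, hp : 0 < p.2⟩
  simp only [det_simplexConeDeriv, abs_of_pos (pow_pos hp m)]

theorem integral_positiveOrthant_eq {E : Type*} [NormedAddCommGroup E] [NormedSpace ℝ E]
    (g : (Fin m → ℝ) × ℝ → E) :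
    ∫ y in positiveOrthant m, g y =
      ∫ p in openSimplex m ×ˢ Ioi 0, p.2 ^ m • g (simplexCone p) := by
  rw [← bijOn_simplexCone.image_eq, integral_image_eq_integral_abs_det_fderiv_smul volume
      (measurableSet_openSimplex.prod measurableSet_Ioi)
      (fun p _ => (hasFDerivAt_simplexCone p).hasFDerivWithinAt) bijOn_simplexCone.injOn,
    setIntegral_congr_fun (measurableSet_openSimplex.prod measurableSet_Ioi)
      (abs_det_simplexConeDeriv_smul g)]

theorem integrableOn_positiveOrthant_iff {E : Type*} [NormedAddCommGroup E] [NormedSpace ℝ E]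
    (g : (Fin m → ℝ) × ℝ → E) :
    IntegrableOn g (positiveOrthant m) ↔
      IntegrableOn (fun p => p.2 ^ m • g (simplexCone p)) (openSimplex m ×ˢ Ioi 0) := by
  rw [← bijOn_simplexCone.image_eq, integrableOn_image_iff_integrableOn_abs_det_fderiv_smul volume
      (measurableSet_openSimplex.prod measurableSet_Ioi)
      (fun p _ => (hasFDerivAt_simplexCone p).hasFDerivWithinAt) bijOn_simplexCone.injOn]
  exact integrableOn_congr_fun (abs_det_simplexConeDeriv_smul g)
    (measurableSet_openSimplex.prod measurableSet_Ioi)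

theorem pow_mul_gammaKernel_simplexCone {ν : ℝ} (β : Fin m → ℝ) (βn : ℝ) {p : (Fin m → ℝ) × ℝ}
    (hp : p ∈ openSimplex m ×ˢ Ioi 0) :
    p.2 ^ m * ((∏ i, gammaKernel ν (β i) ((simplexCone p).1 i)) *
        gammaKernel ν βn (simplexCone p).2) =
      (∏ i, p.1 i ^ (ν * β i - 1)) * (1 - ∑ i, p.1 i) ^ (ν * βn - 1) *
        (p.2 ^ (ν * (∑ i, β i + βn) - 1) *
          exp (-((∑ i, p.1 i ^ ν + (1 - ∑ i, p.1 i) ^ ν) * p.2 ^ ν))) := by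
  obtain ⟨q, t⟩ := p
  obtain ⟨⟨hq, hsum⟩, ht : 0 < t⟩ := hp
  have hpow : (m : ℝ) + ∑ i, (ν * β i - 1) + (ν * βn - 1) = ν * (∑ i, β i + βn) - 1 := by
    simp only [Finset.sum_sub_distrib, ← Finset.mul_sum, Finset.sum_const, Finset.card_univ,
      Fintype.card_fin, nsmul_eq_mul, mul_one]
    ring
  simp only [simplexCone, Pi.smul_apply, smul_eq_mul]
  rw [gammaKernel_mul ht.le (sub_pos.2 hsum).le]
  simp only [gammaKernel_mul ht.le (hq _).1.le, Finset.prod_mul_distrib, ← rpow_sum_of_pos ht,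
    ← exp_sum, ← rpow_natCast t m, ← hpow, rpow_add ht]
  rw [show -((∑ i, q i ^ ν + (1 - ∑ i, q i) ^ ν) * t ^ ν) =
      ∑ i, -(t ^ ν * q i ^ ν) + -(t ^ ν * (1 - ∑ i, q i) ^ ν) by
    rw [Finset.sum_neg_distrib, ← Finset.mul_sum]; ring, exp_add]
  ring

theorem setIntegral_prod_Ioi_mul_rpow_mul_exp_neg {α : Type*} [MeasurableSpace α]
    {μ : Measure α} [SFinite μ] {s : Set α} (hs : MeasurableSet s) {ν B : ℝ} (hν : 0 < ν)
    (hB : 0 < B) {F S : α → ℝ} (hS : ∀ x ∈ s, 0 < S x)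
    (hint : IntegrableOn (fun p : α × ℝ => F p.1 * (p.2 ^ (ν * B - 1) * exp (-(S p.1 * p.2 ^ ν))))
      (s ×ˢ Ioi 0) (μ.prod volume)) :
    ∫ p in s ×ˢ Ioi 0, F p.1 * (p.2 ^ (ν * B - 1) * exp (-(S p.1 * p.2 ^ ν))) ∂μ.prod volume =
      (∫ x in s, F x * S x ^ (-B) ∂μ) * (Gamma B / ν) := by
  rw [setIntegral_prod _ hint, ← integral_mul_const]
  refine setIntegral_congr_fun hs fun x hx => ?_
  simp only [integral_const_mul, integral_Ioi_rpow_mul_exp_neg_mul_rpow hν hB (hS x hx)]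
  ring

theorem integral_openSimplex_mul_Gamma {ν : ℝ} (hν : 0 < ν) {β : Fin m → ℝ} {βn : ℝ}
    (hβ : ∀ i, 0 < β i) (hβn : 0 < βn) :
    (∫ q in openSimplex m, (∏ i, q i ^ (ν * β i - 1)) * (1 - ∑ i, q i) ^ (ν * βn - 1) *
        (∑ i, q i ^ ν + (1 - ∑ i, q i) ^ ν) ^ (-(∑ i, β i + βn))) *
        (Gamma (∑ i, β i + βn) / ν) =
      ∫ y in positiveOrthant m, (∏ i, gammaKernel ν (β i) (y.1 i)) * gammaKernel ν βn y.2 := by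
  have hB : 0 < ∑ i, β i + βn :=
    add_pos_of_nonneg_of_pos (Finset.sum_nonneg fun i _ => (hβ i).le) hβn
  have hS : ∀ q ∈ openSimplex m, 0 < ∑ i, q i ^ ν + (1 - ∑ i, q i) ^ ν := fun q hq =>
    add_pos_of_nonneg_of_pos (Finset.sum_nonneg fun i _ => rpow_nonneg (hq.1 i).1.le ν)
      (rpow_pos_of_pos (sub_pos.2 hq.2) ν)
  have hs : MeasurableSet (openSimplex m ×ˢ Ioi (0 : ℝ)) :=
    measurableSet_openSimplex.prod measurableSet_Ioi
  have hcone : EqOn _ _ (openSimplex m ×ˢ Ioi (0 : ℝ)) := fun p hp =>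
    pow_mul_gammaKernel_simplexCone (ν := ν) β βn hp
  have hint := ((integrableOn_positiveOrthant_iff _).1 (integrableOn_positiveOrthant_prod_mul
    (fun i => integrableOn_gammaKernel hν (hβ i)) (integrableOn_gammaKernel hν hβn))).congr_fun
      hcone hs
  rw [Measure.volume_eq_prod] at hint
  rw [integral_positiveOrthant_eq]
  simp only [smul_eq_mul]
  rw [setIntegral_congr_fun hs hcone, Measure.volume_eq_prod]
  exact (setIntegral_prod_Ioi_mul_rpow_mul_exp_neg measurableSet_openSimplex hν hB hS
    (F := fun q => (∏ i, q i ^ (ν * β i - 1)) * (1 - ∑ i, q i) ^ (ν * βn - 1)) hint).symm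

end GenDirichlet

open GenDirichlet in
theorem genDirichlet_normalization_general (m : ℕ) (ν : ℝ) (hν : 0 < ν)
    (β : Fin m → ℝ) (βn : ℝ) (hβ : ∀ i, 0 < β i) (hβn : 0 < βn) :
    ∫ q in {q : Fin m → ℝ | (∀ i, 0 < q i ∧ q i < 1) ∧ ∑ i, q i < 1},
        (∏ i, q i ^ (ν * β i - 1)) * (1 - ∑ i, q i) ^ (ν * βn - 1)
          * ((∑ i, q i ^ ν) + (1 - ∑ i, q i) ^ ν) ^ (-((∑ i, β i) + βn))
      = (∏ i, Real.Gamma (β i)) * Real.Gamma βn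
          / (ν ^ m * Real.Gamma ((∑ i, β i) + βn)) := by
  have hΓ : 0 < Gamma (∑ i, β i + βn) :=
    Gamma_pos_of_pos (add_pos_of_nonneg_of_pos (Finset.sum_nonneg fun i _ => (hβ i).le) hβn)
  have key := integral_openSimplex_mul_Gamma hν hβ hβn
  rw [integral_positiveOrthant_prod_mul, integral_gammaKernel hν hβn,
    Finset.prod_congr rfl fun i _ => integral_gammaKernel hν (hβ i), Finset.prod_div_distrib,
    Finset.prod_const, Finset.card_univ, Fintype.card_fin] at key
  change (∫ q in openSimplex m, _) = _
  rw [eq_div_iff (by positivity)]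
  field_simp at key
  linear_combination key

theorem genDirichlet_normalization (m : ℕ) (hm : 1 ≤ m) (ν : ℝ) (hν : 0 < ν)
    (β : Fin m → ℝ) (βn : ℝ) (hβ : ∀ i, 0 < β i) (hβn : 0 < βn) :
    ∫ q in {q : Fin m → ℝ | (∀ i, 0 < q i ∧ q i < 1) ∧ ∑ i, q i < 1},
        (∏ i, q i ^ (ν * β i - 1)) * (1 - ∑ i, q i) ^ (ν * βn - 1)
          * ((∑ i, q i ^ ν) + (1 - ∑ i, q i) ^ ν) ^ (-((∑ i, β i) + βn))
      = (∏ i, Real.Gamma (β i)) * Real.Gamma βn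
          / (ν ^ m * Real.Gamma ((∑ i, β i) + βn)) :=
  genDirichlet_normalization_general m ν hν β βn hβ hβn
end

section
/- Conversely, if M ∼ Beta(β₁, β₂) and Q = (M/(1−M))^{1/ν} / (1 + (M/(1−M))^{1/ν}), then Q has density f_Q(q) = ν [Γ(β₁+β₂)/(Γ(β₁)Γ(β₂))] q^{νβ₁−1}(1−q)^{νβ₂−1}(q^ν + (1−q)^ν)^{−(β₁+β₂)} on (0,1). -/
open MeasureTheory Real Set ProbabilityTheory

/-- One-dimensional generalized Dirichlet density (n = 2 case). -/
noncomputable def genDir2Pdf (ν β₁ β₂ q : ℝ) : ℝ :=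
  ν * (Real.Gamma (β₁ + β₂) / (Real.Gamma β₁ * Real.Gamma β₂)) *
    q ^ (ν * β₁ - 1) * (1 - q) ^ (ν * β₂ - 1) * (q ^ ν + (1 - q) ^ ν) ^ (-(β₁ + β₂))

/-- Beta(β₁, β₂) density on (0,1). -/
noncomputable def betaPdf (β₁ β₂ m : ℝ) : ℝ :=
  m ^ (β₁ - 1) * (1 - m) ^ (β₂ - 1) * Real.Gamma (β₁ + β₂) /
    (Real.Gamma β₁ * Real.Gamma β₂)

/-!
Write `H_c x = x ^ c / (x ^ c + (1 - x) ^ c)`; its odds `H_c x / (1 - H_c x)` are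
`(x / (1 - x)) ^ c`, so `H_d ∘ H_c = H_{c d}` on `(0, 1)`. The transform is `Q = H_{1/ν} M`, whose
inverse is the smooth bijection `H_ν` of `(0, 1)`. The change of variables `M = H_ν Q` gives `Q`
the density `|H_ν' q| f_M (H_ν q)`, and expanding `H_ν'` turns this into the stated density.
-/

theorem MeasureTheory.map_withDensity_ofReal_indicator_of_invOn {s : Set ℝ}
    (hs : MeasurableSet s) {f g h h' : ℝ → ℝ} (hg : Measurable g) (hinv : InvOn g h s s)
    (hg_maps : MapsTo g s s) (hh_maps : MapsTo h s s)
    (hh' : ∀ x ∈ s, HasDerivWithinAt h (h' x) s x) :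
    (volume.withDensity fun x => ENNReal.ofReal (s.indicator f x)).map g
      = volume.withDensity fun y => ENNReal.ofReal (s.indicator (fun y => |h' y| * f (h y)) y) := by
  have hind : ∀ u : ℝ → ℝ, (fun x => ENNReal.ofReal (s.indicator u x))
      = s.indicator fun x => ENNReal.ofReal (u x) := fun u =>
    (indicator_comp_of_zero ENNReal.ofReal_zero).symm
  have himage : ∀ A, h '' (A ∩ s) = g ⁻¹' A ∩ s := fun A => by
    rw [hinv.1.image_inter', (hinv.bijOn hh_maps hg_maps).image_eq]
  ext A hA
  rw [Measure.map_apply hg hA, withDensity_apply _ (hg hA), withDensity_apply _ hA, hind, hind,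
    lintegral_indicator hs, lintegral_indicator hs, Measure.restrict_restrict hs,
    Measure.restrict_restrict hs, inter_comm s, inter_comm s, ← himage,
    lintegral_image_eq_lintegral_abs_deriv_mul (hA.inter hs)
      (fun x hx => (hh' x hx.2).mono inter_subset_right) (hinv.1.injOn.mono inter_subset_right)]
  refine setLIntegral_congr_fun (hA.inter hs) fun x _ => ?_
  rw [ENNReal.ofReal_mul (abs_nonneg _)]

noncomputable def oddsPow (c x : ℝ) : ℝ := x ^ c / (x ^ c + (1 - x) ^ c)

lemma oddsPow_div_add {a b : ℝ} (ha : 0 < a) (hb : 0 < b) (c : ℝ) :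
    oddsPow c (a / (a + b)) = a ^ c / (a ^ c + b ^ c) := by
  have hab : 0 < a + b := by positivity
  have hsub : 1 - a / (a + b) = b / (a + b) := by rw [one_sub_div hab.ne', add_sub_cancel_left]
  rw [oddsPow, hsub, div_rpow ha.le hab.le, div_rpow hb.le hab.le]
  field_simp

lemma oddsPow_mem_Ioo {x : ℝ} (hx : x ∈ Ioo (0 : ℝ) 1) (c : ℝ) : oddsPow c x ∈ Ioo (0 : ℝ) 1 := by
  have ha : 0 < x ^ c := rpow_pos_of_pos hx.1 c
  have hb : 0 < (1 - x) ^ c := rpow_pos_of_pos (sub_pos.2 hx.2) c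
  exact ⟨by unfold oddsPow; positivity, (div_lt_one (by positivity)).2 (by linarith)⟩

lemma oddsPow_oddsPow {x : ℝ} (hx : x ∈ Ioo (0 : ℝ) 1) (c d : ℝ) :
    oddsPow d (oddsPow c x) = oddsPow (c * d) x := by
  rw [show oddsPow c x = x ^ c / (x ^ c + (1 - x) ^ c) from rfl,
    oddsPow_div_add (rpow_pos_of_pos hx.1 c) (rpow_pos_of_pos (sub_pos.2 hx.2) c),
    ← rpow_mul hx.1.le, ← rpow_mul (sub_pos.2 hx.2).le, oddsPow]

lemma oddsPow_one (x : ℝ) : oddsPow 1 x = x := by simp [oddsPow]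

lemma invOn_oddsPow {c : ℝ} (hc : c ≠ 0) :
    InvOn (oddsPow c⁻¹) (oddsPow c) (Ioo 0 1) (Ioo 0 1) :=
  ⟨fun x hx => by rw [oddsPow_oddsPow hx, mul_inv_cancel₀ hc, oddsPow_one],
    fun x hx => by rw [oddsPow_oddsPow hx, inv_mul_cancel₀ hc, oddsPow_one]⟩

lemma odds_rpow_div_one_add_eq_oddsPow {x : ℝ} (hx : x ∈ Ioo (0 : ℝ) 1) (c : ℝ) :
    (x / (1 - x)) ^ c / (1 + (x / (1 - x)) ^ c) = oddsPow c x := by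
  have ha : 0 < x ^ c := rpow_pos_of_pos hx.1 c
  have hb : 0 < (1 - x) ^ c := rpow_pos_of_pos (sub_pos.2 hx.2) c
  rw [div_rpow hx.1.le (sub_pos.2 hx.2).le, oddsPow]
  field_simp
  ring

lemma hasDerivAt_oddsPow {x : ℝ} (hx : x ∈ Ioo (0 : ℝ) 1) (c : ℝ) :
    HasDerivAt (oddsPow c)
      (c * x ^ (c - 1) * (1 - x) ^ (c - 1) / (x ^ c + (1 - x) ^ c) ^ 2) x := by
  have h1x : 0 < 1 - x := sub_pos.2 hx.2
  have hnum : HasDerivAt (fun y => y ^ c) (c * x ^ (c - 1)) x :=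
    hasDerivAt_rpow_const (Or.inl hx.1.ne')
  have hsub : HasDerivAt (fun y => (1 - y) ^ c) (-(c * (1 - x) ^ (c - 1))) x := by
    simpa [Function.comp_def] using ((hasDerivAt_rpow_const (p := c) (Or.inl h1x.ne')).comp x
      ((hasDerivAt_id x).const_sub 1))
  have ha : 0 < x ^ c := rpow_pos_of_pos hx.1 c
  have hb : 0 < (1 - x) ^ c := rpow_pos_of_pos h1x c
  have hS : x ^ c + (1 - x) ^ c ≠ 0 := by positivity
  refine (hnum.div (hnum.add hsub) hS).congr_deriv ?_
  simp only [Pi.add_apply]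
  rw [rpow_sub_one hx.1.ne', rpow_sub_one h1x.ne']
  field_simp [hx.1.ne', h1x.ne']
  ring

lemma abs_deriv_oddsPow_mul_betaPdf {ν : ℝ} (hν : 0 ≤ ν) {q : ℝ} (hq : q ∈ Ioo (0 : ℝ) 1)
    (β₁ β₂ : ℝ) :
    |deriv (oddsPow ν) q| * betaPdf β₁ β₂ (oddsPow ν q) = genDir2Pdf ν β₁ β₂ q := by
  obtain ⟨hq0, hq1⟩ := hq
  have h1q : 0 < 1 - q := sub_pos.2 hq1
  have ha : 0 < q ^ ν := rpow_pos_of_pos hq0 ν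
  have hb : 0 < (1 - q) ^ ν := rpow_pos_of_pos h1q ν
  have hS : 0 < q ^ ν + (1 - q) ^ ν := by positivity
  have hsub : 1 - oddsPow ν q = (1 - q) ^ ν / (q ^ ν + (1 - q) ^ ν) := by
    rw [oddsPow, one_sub_div hS.ne', add_sub_cancel_left]
  have hsplit : ∀ {y : ℝ}, 0 < y → ∀ β, y ^ (ν * β - 1) = y ^ (ν - 1) * (y ^ ν) ^ (β - 1) := by
    intro y hy β
    rw [← rpow_mul hy.le, ← rpow_add hy]
    congr 1
    ring
  have hSpow : ∀ {S : ℝ}, 0 < S →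
      S ^ (-(β₁ + β₂)) = (S ^ 2)⁻¹ * (S ^ (β₁ - 1))⁻¹ * (S ^ (β₂ - 1))⁻¹ := by
    intro S hS
    rw [← mul_inv, ← mul_inv, ← rpow_natCast, ← rpow_add hS, ← rpow_add hS, rpow_neg hS.le]
    congr 2
    push_cast
    ring
  rw [(hasDerivAt_oddsPow ⟨hq0, hq1⟩ ν).deriv, abs_of_nonneg (by positivity), betaPdf,
    genDir2Pdf, hsub, oddsPow, div_rpow ha.le hS.le, div_rpow hb.le hS.le, hsplit hq0,
    hsplit h1q, hSpow hS]
  ring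

theorem beta_transform_is_genDir2_general {Ω : Type*} [MeasurableSpace Ω] (μ : Measure Ω)
    (M : Ω → ℝ) (hM : Measurable M) (ν β₁ β₂ : ℝ)
    (hν : 0 < ν)
    (hlaw : μ.map M = volume.withDensity
      (fun m => ENNReal.ofReal (Set.indicator (Set.Ioo 0 1) (betaPdf β₁ β₂) m))) :
    μ.map (fun ω => (M ω / (1 - M ω)) ^ (1 / ν) / (1 + (M ω / (1 - M ω)) ^ (1 / ν)))
      = volume.withDensity
        (fun q => ENNReal.ofReal (Set.indicator (Set.Ioo 0 1) (genDir2Pdf ν β₁ β₂) q)) := by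
  set T : ℝ → ℝ := fun m => (m / (1 - m)) ^ (1 / ν) / (1 + (m / (1 - m)) ^ (1 / ν))
  have hT : EqOn (oddsPow ν⁻¹) T (Ioo 0 1) := fun m hm => by
    rw [← one_div]; exact (odds_rpow_div_one_add_eq_oddsPow hm _).symm
  have hinv : InvOn T (oddsPow ν) (Ioo 0 1) (Ioo 0 1) :=
    ⟨(invOn_oddsPow hν.ne').1.congr_left (fun q hq => oddsPow_mem_Ioo hq ν) hT,
      (invOn_oddsPow hν.ne').2.congr_left hT⟩
  change μ.map (T ∘ M) = _
  rw [← Measure.map_map (by fun_prop) hM, hlaw,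
    map_withDensity_ofReal_indicator_of_invOn measurableSet_Ioo (by fun_prop) hinv
      (MapsTo.congr (fun m hm => oddsPow_mem_Ioo hm _) hT)
      (fun q hq => oddsPow_mem_Ioo hq ν)
      (fun q hq => (hasDerivAt_oddsPow hq ν).differentiableAt.hasDerivAt.hasDerivWithinAt),
    indicator_congr fun q hq => abs_deriv_oddsPow_mul_betaPdf hν.le hq β₁ β₂]

theorem beta_transform_is_genDir2 {Ω : Type*} [MeasurableSpace Ω] (μ : Measure Ω)
    [IsProbabilityMeasure μ] (M : Ω → ℝ) (hM : Measurable M) (ν β₁ β₂ : ℝ)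
    (hν : 0 < ν) (hβ₁ : 0 < β₁) (hβ₂ : 0 < β₂)
    (hlaw : μ.map M = volume.withDensity
      (fun m => ENNReal.ofReal (Set.indicator (Set.Ioo 0 1) (betaPdf β₁ β₂) m))) :
    μ.map (fun ω => (M ω / (1 - M ω)) ^ (1 / ν) / (1 + (M ω / (1 - M ω)) ^ (1 / ν)))
      = volume.withDensity
        (fun q => ENNReal.ofReal (Set.indicator (Set.Ioo 0 1) (genDir2Pdf ν β₁ β₂) q)) :=
  beta_transform_is_genDir2_general μ M hM ν β₁ β₂ hν hlaw
end

section
/- Let Z₁ and Z₂ be independent with Zᵢ^ν ∼ Gamma(βᵢ,1) (i.e. Zᵢ has generalized Gamma density ν z^{νβᵢ−1} e^{−z^ν}/Γ(βᵢ)), ν > 0. Then Q = Z₁/(Z₁+Z₂) has density f_Q(q) = ν [Γ(β₁+β₂)/(Γ(β₁)Γ(β₂))] q^{νβ₁−1}(1−q)^{νβ₂−1}(q^ν + (1−q)^ν)^{−(β₁+β₂)} on (0,1). -/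
open MeasureTheory Real Set ProbabilityTheory

/-- Density of the generalized Gamma distribution with parameters ν, α. -/
noncomputable def genGammaPdf (ν α x : ℝ) : ℝ :=
  ν * x ^ (ν * α - 1) * Real.exp (-(x ^ ν)) / Real.Gamma α

/-!
For independent positive `X`, `Y` with densities `f`, `g`, slicing at `X = x` and substituting
`y = x (1 - q) / q`, then `x = q t`, shows that `X / (X + Y)` has density
`q ↦ ∫₀^∞ t f(q t) g((1 - q) t) dt` on `(0, 1)`. For generalized Gamma densities the integrand is
a constant multiple of `t ^ (ν (β₁ + β₂) - 1) * exp (-(q ^ ν + (1 - q) ^ ν) t ^ ν)`, whose integral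
is `Γ(β₁ + β₂) (q ^ ν + (1 - q) ^ ν) ^ (-(β₁ + β₂)) / ν`.
-/

open scoped ENNReal

theorem lintegral_rpow_mul_exp_neg_mul_rpow {p q b : ℝ} (hp : 0 < p) (hq : -1 < q) (hb : 0 < b) :
    ∫⁻ x in Ioi (0 : ℝ), ENNReal.ofReal (x ^ q * exp (-b * x ^ p)) =
      ENNReal.ofReal (b ^ (-(q + 1) / p) * (1 / p) * Gamma ((q + 1) / p)) := by
  rw [← ofReal_integral_eq_lintegral_ofReal (integrableOn_rpow_mul_exp_neg_mul_rpow hq hp hb),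
    integral_rpow_mul_exp_neg_mul_rpow hp hq hb]
  filter_upwards [ae_restrict_mem measurableSet_Ioi] with x (hx : 0 < x)
  positivity

theorem lintegral_Ioi_comp_mul_left {c : ℝ} (hc : 0 < c) (h : ℝ → ℝ≥0∞) :
    ∫⁻ x in Ioi 0, h x = ∫⁻ t in Ioi 0, ENNReal.ofReal c * h (c * t) := by
  have hderiv (t : ℝ) : HasDerivWithinAt (c * ·) c (Ioi 0) t := by
    simpa using (hasDerivAt_id t).const_mul c |>.hasDerivWithinAt
  have key := lintegral_image_eq_lintegral_abs_deriv_mul measurableSet_Ioi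
    (fun t _ => hderiv t) (mul_right_injective₀ hc.ne').injOn h
  rwa [image_mul_left_Ioi hc, mul_zero, abs_of_pos hc] at key

theorem image_div_sub_self_Ioo_inter {x : ℝ} (hx : 0 < x) (A : Set ℝ) :
    (fun q => x / q - x) '' (Ioo 0 1 ∩ A) = Ioi 0 ∩ (fun y => x / (x + y)) ⁻¹' A := by
  ext y
  constructor
  · rintro ⟨q, ⟨⟨hq0, hq1⟩, hqA⟩, rfl⟩
    refine ⟨?_, ?_⟩
    · simp only [mem_Ioi, sub_pos]
      exact lt_div_iff₀ hq0 |>.mpr (by nlinarith)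
    · simpa [mem_preimage, show x + (x / q - x) = x / q by ring, div_div_cancel₀ hx.ne']
  · rintro ⟨hy : 0 < y, hyA⟩
    have hxy : 0 < x + y := by linarith
    refine ⟨x / (x + y), ⟨⟨by positivity, (div_lt_one hxy).mpr (by linarith)⟩, hyA⟩, ?_⟩
    field_simp
    ring

theorem setLIntegral_Ioi_inter_preimage_div_add {x : ℝ} (hx : 0 < x) {A : Set ℝ}
    (hA : MeasurableSet A) (g : ℝ → ℝ≥0∞) :
    ∫⁻ y in Ioi 0 ∩ (fun y => x / (x + y)) ⁻¹' A, g y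
      = ∫⁻ q in Ioo 0 1 ∩ A, ENNReal.ofReal (x / q ^ 2) * g (x / q - x) := by
  have hderiv : ∀ q ∈ Ioo 0 1 ∩ A,
      HasDerivWithinAt (fun q => x / q - x) (-(x / q ^ 2)) (Ioo 0 1 ∩ A) q := by
    rintro q ⟨⟨hq0, -⟩, -⟩
    simpa [div_eq_mul_inv] using
      (((hasDerivAt_inv hq0.ne').const_mul x).sub_const x).hasDerivWithinAt
  have hinj : InjOn (fun q => x / q - x) (Ioo 0 1 ∩ A) := by
    rintro a ⟨⟨ha, -⟩, -⟩ b ⟨⟨hb, -⟩, -⟩ hab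
    simpa [div_eq_mul_inv, hx.ne'] using hab
  rw [← image_div_sub_self_Ioo_inter hx, lintegral_image_eq_lintegral_abs_deriv_mul
    (measurableSet_Ioo.inter hA) hderiv hinj]
  refine setLIntegral_congr_fun (measurableSet_Ioo.inter hA) fun q _ => ?_
  rw [abs_neg, abs_of_nonneg (by positivity)]

theorem map_div_add_prod_withDensity_indicator_Ioi {f g : ℝ → ℝ≥0∞} (hf : Measurable f)
    (hg : Measurable g) :
    ((volume.withDensity ((Ioi 0).indicator f)).prod
        (volume.withDensity ((Ioi 0).indicator g))).map (fun p : ℝ × ℝ => p.1 / (p.1 + p.2))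
      = volume.withDensity ((Ioo 0 1).indicator fun q =>
          ∫⁻ t in Ioi 0, ENNReal.ofReal t * f (q * t) * g ((1 - q) * t)) := by
  set ratio : ℝ × ℝ → ℝ := fun p => p.1 / (p.1 + p.2)
  have hratio : Measurable ratio := by fun_prop
  ext A hA
  have hA' : MeasurableSet (Ioo 0 1 ∩ A) := measurableSet_Ioo.inter hA
  have hslice : ∀ x ∈ Ioi (0 : ℝ),
      f x * volume.withDensity ((Ioi 0).indicator g) (Prod.mk x ⁻¹' (ratio ⁻¹' A))
        = ∫⁻ q in Ioo 0 1 ∩ A, f x * (ENNReal.ofReal (x / q ^ 2) * g (x / q - x)) := by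
    intro x (hx : 0 < x)
    rw [withDensity_apply _ (measurable_prodMk_left (hratio hA)),
      setLIntegral_indicator measurableSet_Ioi]
    exact congrArg (f x * ·) (setLIntegral_Ioi_inter_preimage_div_add hx hA g) |>.trans
      (lintegral_const_mul _ (by fun_prop)).symm
  have hinner : ∀ q ∈ Ioo (0 : ℝ) 1 ∩ A,
      ∫⁻ x in Ioi 0, f x * (ENNReal.ofReal (x / q ^ 2) * g (x / q - x))
        = ∫⁻ t in Ioi 0, ENNReal.ofReal t * f (q * t) * g ((1 - q) * t) := by
    rintro q ⟨⟨hq0, -⟩, -⟩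
    rw [lintegral_Ioi_comp_mul_left hq0]
    refine setLIntegral_congr_fun measurableSet_Ioi fun t (ht : 0 < t) => ?_
    have hsub : q * t / q - q * t = (1 - q) * t := by field_simp
    have hjac : ENNReal.ofReal q * ENNReal.ofReal (q * t / q ^ 2) = ENNReal.ofReal t := by
      rw [← ENNReal.ofReal_mul hq0.le]
      congr 1
      field_simp
    rw [hsub, ← hjac]
    ring
  rw [Measure.map_apply hratio hA, Measure.prod_apply (hratio hA),
    withDensity_indicator measurableSet_Ioi f,
    lintegral_withDensity_eq_lintegral_mul _ hf (measurable_measure_prodMk_left (hratio hA)),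
    withDensity_apply _ hA, setLIntegral_indicator measurableSet_Ioo]
  simp only [Pi.mul_apply]
  rw [setLIntegral_congr_fun measurableSet_Ioi hslice,
    lintegral_lintegral_swap (by fun_prop), setLIntegral_congr_fun hA' hinner]

theorem genGammaPdf_nonneg {ν α x : ℝ} (hν : 0 ≤ ν) (hα : 0 ≤ α) (hx : 0 ≤ x) :
    0 ≤ genGammaPdf ν α x := by
  have := Real.Gamma_nonneg_of_nonneg hα
  unfold genGammaPdf
  positivity

theorem measurable_genGammaPdf (ν α : ℝ) : Measurable (genGammaPdf ν α) := by
  unfold genGammaPdf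
  fun_prop

theorem mul_genGammaPdf_mul_genGammaPdf {ν β₁ β₂ q t : ℝ} (hq₀ : 0 ≤ q) (hq₁ : q ≤ 1)
    (ht : 0 < t) :
    t * genGammaPdf ν β₁ (q * t) * genGammaPdf ν β₂ ((1 - q) * t)
      = ν ^ 2 * q ^ (ν * β₁ - 1) * (1 - q) ^ (ν * β₂ - 1) / (Gamma β₁ * Gamma β₂) *
        (t ^ (ν * (β₁ + β₂) - 1) * exp (-(q ^ ν + (1 - q) ^ ν) * t ^ ν)) := by
  have h1q : 0 ≤ 1 - q := by linarith
  have ht_pow : t ^ (ν * (β₁ + β₂) - 1) = t * t ^ (ν * β₁ - 1) * t ^ (ν * β₂ - 1) := by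
    rw [show ν * (β₁ + β₂) - 1 = 1 + (ν * β₁ - 1) + (ν * β₂ - 1) by ring, rpow_add ht,
      rpow_add ht, rpow_one]
  have hexp : exp (-(q ^ ν + (1 - q) ^ ν) * t ^ ν)
      = exp (-(q * t) ^ ν) * exp (-((1 - q) * t) ^ ν) := by
    rw [← exp_add, mul_rpow hq₀ ht.le, mul_rpow h1q ht.le]
    ring_nf
  simp only [genGammaPdf, mul_rpow hq₀ ht.le, mul_rpow h1q ht.le, ht_pow, hexp]
  ring

theorem lintegral_mul_genGammaPdf_mul_genGammaPdf {ν β₁ β₂ q : ℝ} (hν : 0 < ν) (hβ₁ : 0 < β₁)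
    (hβ₂ : 0 < β₂) (hq₀ : 0 < q) (hq₁ : q < 1) :
    ∫⁻ t in Ioi 0, ENNReal.ofReal t * ENNReal.ofReal (genGammaPdf ν β₁ (q * t)) *
        ENNReal.ofReal (genGammaPdf ν β₂ ((1 - q) * t))
      = ENNReal.ofReal (genDir2Pdf ν β₁ β₂ q) := by
  have h1q : 0 < 1 - q := by linarith
  have hS : 0 < q ^ ν + (1 - q) ^ ν := by positivity
  have hΓ₁ := Gamma_pos_of_pos hβ₁
  have hΓ₂ := Gamma_pos_of_pos hβ₂
  have hexponent : -1 < ν * (β₁ + β₂) - 1 := by nlinarith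
  rw [setLIntegral_congr_fun measurableSet_Ioi fun t (ht : 0 < t) => by
      rw [← ENNReal.ofReal_mul ht.le,
        ← ENNReal.ofReal_mul (mul_nonneg ht.le (genGammaPdf_nonneg hν.le hβ₁.le (by positivity))),
        mul_genGammaPdf_mul_genGammaPdf hq₀.le hq₁.le ht, ENNReal.ofReal_mul (by positivity)],
    lintegral_const_mul' _ _ ENNReal.ofReal_ne_top,
    lintegral_rpow_mul_exp_neg_mul_rpow hν hexponent hS,
    ← ENNReal.ofReal_mul (by positivity)]
  congr 1
  have hB : (ν * (β₁ + β₂) - 1 + 1) / ν = β₁ + β₂ := by field_simp; ring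
  rw [neg_div, hB, genDir2Pdf]
  field_simp

theorem genGamma_ratio_is_genDir2 {Ω : Type*} [MeasurableSpace Ω] (μ : Measure Ω)
    [IsProbabilityMeasure μ] (Z₁ Z₂ : Ω → ℝ) (hZ₁ : Measurable Z₁)
    (hZ₂ : Measurable Z₂) (hindep : IndepFun Z₁ Z₂ μ) (ν β₁ β₂ : ℝ)
    (hν : 0 < ν) (hβ₁ : 0 < β₁) (hβ₂ : 0 < β₂)
    (hlaw₁ : μ.map Z₁ = volume.withDensity
      (fun z => ENNReal.ofReal (Set.indicator (Set.Ioi 0) (genGammaPdf ν β₁) z)))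
    (hlaw₂ : μ.map Z₂ = volume.withDensity
      (fun z => ENNReal.ofReal (Set.indicator (Set.Ioi 0) (genGammaPdf ν β₂) z))) :
    μ.map (fun ω => Z₁ ω / (Z₁ ω + Z₂ ω))
      = volume.withDensity
        (fun q => ENNReal.ofReal (Set.indicator (Set.Ioo 0 1) (genDir2Pdf ν β₁ β₂) q)) := by
  have hmap : μ.map (fun ω => Z₁ ω / (Z₁ ω + Z₂ ω))
      = ((μ.map Z₁).prod (μ.map Z₂)).map fun p : ℝ × ℝ => p.1 / (p.1 + p.2) := by
    rw [← (indepFun_iff_map_prod_eq_prod_map_map hZ₁.aemeasurable hZ₂.aemeasurable).mp hindep,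
      Measure.map_map (by fun_prop) (hZ₁.prodMk hZ₂)]
    rfl
  have hofReal (s : Set ℝ) (f : ℝ → ℝ) :
      (fun z => ENNReal.ofReal (s.indicator f z)) = s.indicator fun z => ENNReal.ofReal (f z) :=
    (indicator_comp_of_zero ENNReal.ofReal_zero).symm
  rw [hmap, hlaw₁, hlaw₂, hofReal, hofReal, hofReal, map_div_add_prod_withDensity_indicator_Ioi
    (measurable_genGammaPdf ν β₁).ennreal_ofReal (measurable_genGammaPdf ν β₂).ennreal_ofReal]
  exact congrArg _ <| indicator_congr fun q ⟨hq₀, hq₁⟩ =>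
    lintegral_mul_genGammaPdf_mul_genGammaPdf hν hβ₁ hβ₂ hq₀ hq₁
end
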